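/- arXiv:math/0601318 — 2 statements merged into one kernel-verified Lean document; each statement's English description precedes it below -/
import Mathlib

section
/- (Brown–Kosaki trace inequality, finite-dimensional case) Let f : ℝ → ℝ be a convex function with f(0) ≤ 0, let A be an n×n Hermitian complex matrix, and let Z be an n×n complex matrix which is a contraction (operator norm at most 1). Then Tr f(Zᴴ A Z) ≤ Tr (Zᴴ f(A) Z). -/
open Matrix

/-- The `j`-th largest eigenvalue of a Hermitian matrix (`0`-indexed, so `eigDesc hA ⟨0, _⟩`
is the largest), counted with multiplicity. -/
noncomputable def eigDesc {n : ℕ} {A : Matrix (Fin n) (Fin n) ℂ} (hA : A.IsHermitian)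
    (j : Fin n) : ℝ :=
  hA.eigenvalues (Tuple.sort hA.eigenvalues j.rev)

/-- Applying a real function to a Hermitian matrix via the functional calculus yields a
Hermitian matrix. -/
lemma isHermitian_cfc {n : ℕ} {A : Matrix (Fin n) (Fin n) ℂ} (hA : A.IsHermitian)
    (f : ℝ → ℝ) : (hA.cfc f).IsHermitian := by
  rw [← hA.cfc_eq]
  exact cfc_predicate f A

lemma isHermitian_half_smul {n : ℕ} {X : Matrix (Fin n) (Fin n) ℂ} (hX : X.IsHermitian) :
    ((2 : ℝ)⁻¹ • X).IsHermitian := by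
  show _ = _
  rw [Matrix.conjTranspose_smul, star_trivial, hX.eq]

lemma isHermitian_sum_conj {m n : ℕ} {A : Fin m → Matrix (Fin n) (Fin n) ℂ}
    (Z : Fin m → Matrix (Fin n) (Fin n) ℂ) (hA : ∀ i, (A i).IsHermitian) :
    (∑ i, (Z i)ᴴ * A i * Z i).IsHermitian := by
  show _ = _
  rw [Matrix.conjTranspose_sum]
  exact Finset.sum_congr rfl fun i _ => (isHermitian_conjTranspose_mul_mul (Z i) (hA i)).eq

open scoped ComplexOrder

/-! Diagonalize `A = V diag(μ) V*` and `Zᴴ A Z = U diag(ν) U*`, and put `W = V* Z U`. Then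
`Wᴴ diag(μ) W = diag(ν)`, so `ν j = ∑ i |W i j|² μ i`, and the weights `|W i j|²` of each column
sum to at most `1` because `W` is again a contraction. Jensen's inequality with the missing mass
put at `0`, where `f ≤ 0`, gives `f (ν j) ≤ ∑ i |W i j|² f (μ i)`; summed over `j` this is the
trace inequality, both traces being unchanged by the unitary change of basis. -/

open Unitary

theorem ConvexOn.map_sum_le_of_sum_le_one {𝕜 E β ι : Type*} [Field 𝕜] [LinearOrder 𝕜]
    [IsStrictOrderedRing 𝕜] [AddCommGroup E] [AddCommGroup β] [PartialOrder β]
    [IsOrderedAddMonoid β] [Module 𝕜 E] [Module 𝕜 β] [IsStrictOrderedModule 𝕜 β]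
    {s : Set E} {f : E → β} {t : Finset ι} {w : ι → 𝕜} {p : ι → E}
    (hf : ConvexOn 𝕜 s f) (hs : 0 ∈ s) (hf0 : f 0 ≤ 0) (hw₀ : ∀ i ∈ t, 0 ≤ w i)
    (hw₁ : ∑ i ∈ t, w i ≤ 1) (hp : ∀ i ∈ t, p i ∈ s) :
    f (∑ i ∈ t, w i • p i) ≤ ∑ i ∈ t, w i • f (p i) := by
  have h := hf.map_add_sum_le hw₀ (sub_add_cancel 1 _) hp (sub_nonneg.2 hw₁) hs
  rw [smul_zero, zero_add] at h
  exact h.trans (add_le_of_nonpos_left (smul_nonpos_of_nonneg_of_nonpos (sub_nonneg.2 hw₁) hf0))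

namespace Matrix

variable {m n 𝕜 : Type*} [Fintype m] [RCLike 𝕜]

lemma conjTranspose_mul_diagonal_mul_apply_self [DecidableEq m] (W : Matrix m n 𝕜) (d : m → ℝ)
    (j : n) :
    (Wᴴ * diagonal (RCLike.ofReal ∘ d : m → 𝕜) * W) j j = ((∑ i, d i * ‖W i j‖ ^ 2 : ℝ) : 𝕜) := by
  rw [mul_apply, RCLike.ofReal_sum]
  refine Finset.sum_congr rfl fun i _ => ?_
  rw [mul_diagonal, conjTranspose_apply, RCLike.ofReal_mul, RCLike.ofReal_pow, ← RCLike.conj_mul,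
    Function.comp_apply, RCLike.star_def]
  ring

lemma conjTranspose_mul_self_apply_self (W : Matrix m n 𝕜) (j : n) :
    (Wᴴ * W) j j = ((∑ i, ‖W i j‖ ^ 2 : ℝ) : 𝕜) := by
  rw [mul_apply, RCLike.ofReal_sum]
  refine Finset.sum_congr rfl fun i _ => ?_
  rw [conjTranspose_apply, RCLike.ofReal_pow, ← RCLike.conj_mul, RCLike.star_def]

variable [Fintype n] [DecidableEq n]

lemma trace_star_mul_mul_of_mem_unitary {U : Matrix n n 𝕜}
    (hU : U ∈ unitary (Matrix n n 𝕜)) (X : Matrix n n 𝕜) : (star U * X * U).trace = X.trace := by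
  rw [trace_mul_cycle, Unitary.mul_star_self_of_mem hU, one_mul]

lemma IsHermitian.trace_cfc {A : Matrix n n 𝕜} (hA : A.IsHermitian) (f : ℝ → ℝ) :
    (hA.cfc f).trace = ((∑ i, f (hA.eigenvalues i) : ℝ) : 𝕜) := by
  rw [IsHermitian.cfc, conjStarAlgAut_apply, trace_mul_cycle, coe_star_mul_self, one_mul,
    trace_diagonal, RCLike.ofReal_sum]
  rfl

theorem sum_map_le_trace_conjTranspose_mul_diagonal_mul [DecidableEq m] {s : Set ℝ} {f : ℝ → ℝ}
    (hf : ConvexOn ℝ s f) (hs : 0 ∈ s) (hf0 : f 0 ≤ 0) {μ : m → ℝ} (hμ : ∀ i, μ i ∈ s)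
    {ν : n → ℝ} {W : Matrix m n ℂ} (hW : (1 - Wᴴ * W).PosSemidef)
    (hν : Wᴴ * diagonal (RCLike.ofReal ∘ μ : m → ℂ) * W = diagonal (RCLike.ofReal ∘ ν)) :
    ((∑ j, f (ν j) : ℝ) : ℂ) ≤ (Wᴴ * diagonal (RCLike.ofReal ∘ f ∘ μ : m → ℂ) * W).trace := by
  have hν_eq (j : n) : ν j = ∑ i, ‖W i j‖ ^ 2 * μ i := by
    have h := congr_fun₂ hν j j
    rw [conjTranspose_mul_diagonal_mul_apply_self, diagonal_apply_eq, Function.comp_apply] at h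
    simpa only [mul_comm, RCLike.ofReal_inj] using h.symm
  have hcol (j : n) : ∑ i, ‖W i j‖ ^ 2 ≤ 1 := by
    have h := hW.diag_nonneg (i := j)
    rwa [sub_apply, one_apply_eq, conjTranspose_mul_self_apply_self, sub_nonneg, ← RCLike.ofReal_one,
      RCLike.ofReal_le_ofReal] at h
  rw [trace]
  simp only [diag_apply, conjTranspose_mul_diagonal_mul_apply_self, ← RCLike.ofReal_sum]
  refine RCLike.ofReal_le_ofReal.2 (Finset.sum_le_sum fun j _ => ?_)
  simpa only [hν_eq, Function.comp_apply, mul_comm, smul_eq_mul] using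
    hf.map_sum_le_of_sum_le_one hs hf0 (fun i _ => sq_nonneg ‖W i j‖) (hcol j) (fun i _ => hμ i)

end Matrix

/-- **Brown–Kosaki trace inequality** (finite-dimensional case): if `f` is convex with
`f 0 ≤ 0`, `A` is Hermitian and `Z` is a contraction (`Zᴴ Z ≤ I`), then
`Tr f(Zᴴ A Z) ≤ Tr (Zᴴ f(A) Z)`. -/
theorem trace_cfc_contraction_le
    {n : ℕ} (f : ℝ → ℝ) (hf : ConvexOn ℝ Set.univ f) (hf0 : f 0 ≤ 0)
    (A : Matrix (Fin n) (Fin n) ℂ) (hA : A.IsHermitian)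
    (Z : Matrix (Fin n) (Fin n) ℂ) (hZ : (1 - Zᴴ * Z).PosSemidef) :
    ((isHermitian_conjTranspose_mul_mul Z hA).cfc f).trace ≤
      (Zᴴ * hA.cfc f * Z).trace := by
  set hB := isHermitian_conjTranspose_mul_mul Z hA
  set U : Matrix (Fin n) (Fin n) ℂ := ↑hB.eigenvectorUnitary
  set V : Matrix (Fin n) (Fin n) ℂ := ↑hA.eigenvectorUnitary
  set W := star V * Z * U
  have hconj (X : Matrix (Fin n) (Fin n) ℂ) :
      Wᴴ * X * W = star U * (Zᴴ * (V * X * star V) * Z) * U := by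
    simp only [W, conjTranspose_mul, star_eq_conjTranspose, conjTranspose_conjTranspose, mul_assoc]
  have hW : (1 - Wᴴ * W).PosSemidef := by
    have h : 1 - Wᴴ * W = star U * (1 - Zᴴ * Z) * U := by
      rw [← mul_one Wᴴ, hconj, mul_one, mul_star_self_of_mem hA.eigenvectorUnitary.2, mul_one,
        mul_sub, sub_mul, mul_one, star_mul_self_of_mem hB.eigenvectorUnitary.2]
    simpa only [h, star_eq_conjTranspose] using hZ.conjTranspose_mul_mul_same U
  have hν : Wᴴ * diagonal (RCLike.ofReal ∘ hA.eigenvalues : Fin n → ℂ) * W =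
      diagonal (RCLike.ofReal ∘ hB.eigenvalues) := by
    have hA_eq := hA.spectral_theorem
    rw [conjStarAlgAut_apply] at hA_eq
    rw [hconj, ← hA_eq]
    simpa using hB.conjStarAlgAut_star_eigenvectorUnitary
  rw [hB.trace_cfc, ← trace_star_mul_mul_of_mem_unitary hB.eigenvectorUnitary.2, IsHermitian.cfc,
    conjStarAlgAut_apply, ← hconj]
  exact sum_map_le_trace_conjTranspose_mul_diagonal_mul hf (Set.mem_univ 0) hf0
    (fun i => Set.mem_univ _) hW hν
end

section
/- (Hansen–Pedersen trace inequality, finite-dimensional case) Let f : ℝ → ℝ be a convex function, let A_1, …, A_m be n×n Hermitian complex matrices, and let Z_1, …, Z_m be n×n complex matrices with ∑_{i=1}^m Z_iᴴ Z_i = I. Then Tr f(∑_i Z_iᴴ A_i Z_i) ≤ Tr (∑_i Z_iᴴ f(A_i) Z_i). -/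
open Matrix

open scoped ComplexOrder

/-! Diagonalise `C = ∑ᵢ Zᵢᴴ Aᵢ Zᵢ` as `C uⱼ = λⱼ uⱼ` and each `Aᵢ` as `Aᵢ vᵢₖ = μᵢₖ vᵢₖ`. Then
`λⱼ = ⟨uⱼ, C uⱼ⟩ = ∑ᵢₖ |⟨vᵢₖ, Zᵢ uⱼ⟩|² μᵢₖ`, and the weights `|⟨vᵢₖ, Zᵢ uⱼ⟩|²` sum to
`∑ᵢ ‖Zᵢ uⱼ‖² = ⟨uⱼ, ∑ᵢ Zᵢᴴ Zᵢ uⱼ⟩ = 1`. Jensen's inequality gives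
`f(λⱼ) ≤ ∑ᵢₖ |⟨vᵢₖ, Zᵢ uⱼ⟩|² f(μᵢₖ) = ⟨uⱼ, (∑ᵢ Zᵢᴴ f(Aᵢ) Zᵢ) uⱼ⟩`, and summing over `j` compares
the two traces. -/

namespace Matrix

variable {𝕜 ι n p : Type*} [Fintype ι] [Fintype n]

lemma conjTranspose_mul_sum_mul {α q : Type*} [Semiring α] [StarRing α] [Fintype p]
    (Z : ι → Matrix n p α) (M : ι → Matrix n n α) (U : Matrix p q α) :
    Uᴴ * (∑ i, (Z i)ᴴ * M i * Z i) * U = ∑ i, (Z i * U)ᴴ * M i * (Z i * U) := by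
  simp only [Matrix.mul_sum, Matrix.sum_mul, conjTranspose_mul, Matrix.mul_assoc]

variable [RCLike 𝕜] [DecidableEq n]

namespace IsHermitian

variable {X : Matrix n n 𝕜}

lemma cfc_id (hX : X.IsHermitian) : hX.cfc id = X := by
  rw [← hX.cfc_eq]
  exact _root_.cfc_id ℝ X

lemma cfc_one (hX : X.IsHermitian) : hX.cfc (fun _ => 1) = 1 := by
  rw [← hX.cfc_eq]
  exact cfc_const_one ℝ X

lemma trace_cfc_s13 (hX : X.IsHermitian) (g : ℝ → ℝ) :
    (hX.cfc g).trace = ∑ k, (g (hX.eigenvalues k) : 𝕜) := by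
  rw [IsHermitian.cfc, Unitary.conjStarAlgAut_apply, trace_mul_cycle,
    Unitary.coe_star_mul_self, Matrix.one_mul, trace_diagonal]
  rfl

lemma conjTranspose_eigenvectorUnitary_mul_mul_apply_self (hX : X.IsHermitian) (j : n) :
    ((hX.eigenvectorUnitary : Matrix n n 𝕜)ᴴ * X * hX.eigenvectorUnitary) j j =
      hX.eigenvalues j := by
  have := hX.conjStarAlgAut_star_eigenvectorUnitary
  rw [Unitary.conjStarAlgAut_star_apply] at this
  rw [← star_eq_conjTranspose, this, diagonal_apply_eq]
  rfl

lemma conjTranspose_mul_cfc_mul_apply_self (hX : X.IsHermitian) (g : ℝ → ℝ)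
    (W : Matrix n p 𝕜) (j : p) :
    (Wᴴ * hX.cfc g * W) j j = ∑ k, ((g (hX.eigenvalues k) *
      ‖((hX.eigenvectorUnitary : Matrix n n 𝕜)ᴴ * W) k j‖ ^ 2 : ℝ) : 𝕜) := by
  set V : Matrix n n 𝕜 := ↑hX.eigenvectorUnitary
  have hconj : Wᴴ * hX.cfc g * W
      = (Vᴴ * W)ᴴ * diagonal (RCLike.ofReal ∘ g ∘ hX.eigenvalues : n → 𝕜) * (Vᴴ * W) := by
    simp only [IsHermitian.cfc, Unitary.conjStarAlgAut_apply, conjTranspose_mul,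
      conjTranspose_conjTranspose, star_eq_conjTranspose, Matrix.mul_assoc, V]
  rw [hconj, mul_apply]
  refine Finset.sum_congr rfl fun k _ => ?_
  rw [mul_diagonal, conjTranspose_apply, RCLike.ofReal_mul, RCLike.ofReal_pow, ← RCLike.conj_mul]
  simp only [Function.comp_apply, RCLike.star_def]
  ring

end IsHermitian

variable {A : ι → Matrix n n 𝕜}

/-- `‖⟨vᵢₖ, Wᵢ eⱼ⟩‖²` for `ik = (i, k)`, where `vᵢₖ` is the `k`-th eigenvector of `Aᵢ`. -/
noncomputable def eigenWeight (hA : ∀ i, (A i).IsHermitian) (W : ι → Matrix n p 𝕜) (j : p)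
    (ik : ι × n) : ℝ :=
  ‖(((hA ik.1).eigenvectorUnitary : Matrix n n 𝕜)ᴴ * W ik.1) ik.2 j‖ ^ 2

lemma sum_conjTranspose_mul_cfc_mul_apply_self (hA : ∀ i, (A i).IsHermitian) (g : ℝ → ℝ)
    (W : ι → Matrix n p 𝕜) (j : p) :
    (∑ i, (W i)ᴴ * (hA i).cfc g * W i) j j =
      ∑ ik : ι × n, ((eigenWeight hA W j ik * g ((hA ik.1).eigenvalues ik.2) : ℝ) : 𝕜) := by
  rw [sum_apply, Fintype.sum_prod_type]
  refine Finset.sum_congr rfl fun i _ => ?_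
  simp only [(hA i).conjTranspose_mul_cfc_mul_apply_self, eigenWeight, mul_comm]

lemma sum_eigenWeight (hA : ∀ i, (A i).IsHermitian) (W : ι → Matrix n p 𝕜) (j : p) :
    ((∑ ik, eigenWeight hA W j ik : ℝ) : 𝕜) = (∑ i, (W i)ᴴ * W i) j j := by
  simpa [IsHermitian.cfc_one] using
    (sum_conjTranspose_mul_cfc_mul_apply_self hA (fun _ => 1) W j).symm

lemma _root_.ConvexOn.map_re_sum_conjTranspose_mul_mul_apply_self_le {f : ℝ → ℝ}
    (hf : ConvexOn ℝ Set.univ f) (hA : ∀ i, (A i).IsHermitian) (W : ι → Matrix n p 𝕜) (j : p)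
    (hW : (∑ i, (W i)ᴴ * W i) j j = 1) :
    f (RCLike.re ((∑ i, (W i)ᴴ * A i * W i) j j)) ≤
      RCLike.re ((∑ i, (W i)ᴴ * (hA i).cfc f * W i) j j) := by
  have hw : ∑ ik, eigenWeight hA W j ik = 1 := by
    exact_mod_cast (sum_eigenWeight hA W j).trans hW
  have hA_id : ∑ i, (W i)ᴴ * A i * W i = ∑ i, (W i)ᴴ * (hA i).cfc id * W i := by
    simp only [IsHermitian.cfc_id]
  rw [hA_id]
  simp only [sum_conjTranspose_mul_cfc_mul_apply_self, ← RCLike.ofReal_sum, RCLike.ofReal_re]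
  exact hf.map_sum_le (fun _ _ => sq_nonneg _) hw (fun _ _ => Set.mem_univ _)

end Matrix

/-- **Hansen–Pedersen trace inequality** (finite-dimensional case): if `f` is convex, the
`Aᵢ` are Hermitian and `∑ᵢ Zᵢᴴ Zᵢ = I`, then
`Tr f(∑ᵢ Zᵢᴴ Aᵢ Zᵢ) ≤ Tr (∑ᵢ Zᵢᴴ f(Aᵢ) Zᵢ)`. -/
theorem trace_cfc_isometric_column_le
    {n m : ℕ} (f : ℝ → ℝ) (hf : ConvexOn ℝ Set.univ f)
    (A : Fin m → Matrix (Fin n) (Fin n) ℂ) (hA : ∀ i, (A i).IsHermitian)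
    (Z : Fin m → Matrix (Fin n) (Fin n) ℂ) (hZ : ∑ i, (Z i)ᴴ * Z i = 1) :
    ((isHermitian_sum_conj Z hA).cfc f).trace ≤
      (∑ i, (Z i)ᴴ * (hA i).cfc f * Z i).trace := by
  set hC := isHermitian_sum_conj Z hA
  set U : Matrix (Fin n) (Fin n) ℂ := ↑hC.eigenvectorUnitary
  set R := ∑ i, (Z i)ᴴ * (hA i).cfc f * Z i
  have hUU : Uᴴ * U = 1 := Unitary.star_mul_self_of_mem hC.eigenvectorUnitary.2
  have hUU' : U * Uᴴ = 1 := Unitary.mul_star_self_of_mem hC.eigenvectorUnitary.2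
  have hUR : (Uᴴ * R * U).IsHermitian :=
    isHermitian_conjTranspose_mul_mul U (isHermitian_sum_conj Z fun i => isHermitian_cfc (hA i) f)
  have hR : R.trace = (Uᴴ * R * U).trace := by
    rw [trace_mul_cycle, hUU', Matrix.one_mul]
  have hZU : ∑ i, (Z i * U)ᴴ * (Z i * U) = 1 := by
    simp only [conjTranspose_mul, Matrix.mul_assoc, ← Matrix.mul_sum]
    simp only [← Matrix.mul_assoc, ← Matrix.sum_mul, hZ, Matrix.mul_one, hUU]
  rw [hC.trace_cfc_s13, hR, trace]
  refine Finset.sum_le_sum fun j _ => ?_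
  rw [diag_apply, ← hUR.coe_re_apply_self, RCLike.ofReal_le_ofReal]
  calc f (hC.eigenvalues j)
      = f (RCLike.re ((∑ i, (Z i * U)ᴴ * A i * (Z i * U)) j j)) := by
        rw [← conjTranspose_mul_sum_mul, hC.conjTranspose_eigenvectorUnitary_mul_mul_apply_self,
          RCLike.ofReal_re]
    _ ≤ RCLike.re ((∑ i, (Z i * U)ᴴ * (hA i).cfc f * (Z i * U)) j j) :=
        hf.map_re_sum_conjTranspose_mul_mul_apply_self_le hA _ j (by rw [hZU, one_apply_eq])
    _ = RCLike.re ((Uᴴ * R * U) j j) := by rw [conjTranspose_mul_sum_mul]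
end
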